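/- arXiv:0812.3529 — 2 statements merged into one kernel-verified Lean document; each statement's English description precedes it below -/
import Mathlib

section
/- Fix ε > 0 and n ≥ 1. Let L : ℝ^n × ℝ^n × ℝ → ℝ be continuously differentiable, x : ℝ → ℝ^n continuous, and h ∈ C_c^∞(ℝ, ℝ^n). Then for every s ∈ ℝ the function t ↦ L(x(t)+s·h(t), d⁺_ε x(t)+s·d⁻_ε h(t), t) − L(x(t), d⁺_ε x(t), t) is integrable on ℝ, and the map s ↦ ∫_ℝ [L(x(t)+s·h(t), d⁺_ε x(t)+s·d⁻_ε h(t), t) − L(x(t), d⁺_ε x(t), t)] dt is differentiable at s = 0 with derivative ∫_ℝ [∂₁L(x(t), d⁺_ε x(t), t)·h(t) + ∂₂L(x(t), d⁺_ε x(t), t)·d⁻_ε h(t)] dt. (This is the first-variation formula for the asymmetrically embedded action with finite-difference evolution operators.) -/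
open MeasureTheory
open scoped RealInnerProductSpace

noncomputable section

/-- Backward (left) finite difference: `d⁺_ε f t = (f t − f (t − ε)) / ε`. -/
def backwardDiff {n : ℕ} (ε : ℝ) (f : ℝ → EuclideanSpace ℝ (Fin n)) (t : ℝ) :
    EuclideanSpace ℝ (Fin n) :=
  ε⁻¹ • (f t - f (t - ε))

/-- Forward (right) finite difference: `d⁻_ε f t = (f (t + ε) − f t) / ε`. -/
def forwardDiff {n : ℕ} (ε : ℝ) (f : ℝ → EuclideanSpace ℝ (Fin n)) (t : ℝ) :
    EuclideanSpace ℝ (Fin n) :=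
  ε⁻¹ • (f (t + ε) - f t)

/-- `∂₁L(x,v,t)`: gradient of `L` with respect to its first `ℝ^n` argument. -/
def grad1 {n : ℕ} (L : EuclideanSpace ℝ (Fin n) × EuclideanSpace ℝ (Fin n) × ℝ → ℝ)
    (x v : EuclideanSpace ℝ (Fin n)) (t : ℝ) : EuclideanSpace ℝ (Fin n) :=
  gradient (fun y => L (y, v, t)) x

/-- `∂₂L(x,v,t)`: gradient of `L` with respect to its second `ℝ^n` argument. -/
def grad2 {n : ℕ} (L : EuclideanSpace ℝ (Fin n) × EuclideanSpace ℝ (Fin n) × ℝ → ℝ)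
    (x v : EuclideanSpace ℝ (Fin n)) (t : ℝ) : EuclideanSpace ℝ (Fin n) :=
  gradient (fun w => L (x, w, t)) v

lemma fderiv_apply_eq_inner {n : ℕ}
    (L : EuclideanSpace ℝ (Fin n) × EuclideanSpace ℝ (Fin n) × ℝ → ℝ)
    (hL : ContDiff ℝ 1 L) (a b : EuclideanSpace ℝ (Fin n)) (t : ℝ)
    (u w : EuclideanSpace ℝ (Fin n)) :
    fderiv ℝ L (a, b, t) (u, w, (0:ℝ)) =
      ⟪grad1 L a b t, u⟫ + ⟪grad2 L a b t, w⟫ := by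
  have hd : Differentiable ℝ L := hL.differentiable one_ne_zero
  have h1 : HasFDerivAt (fun y : EuclideanSpace ℝ (Fin n) => L (y, b, t))
      ((fderiv ℝ L (a, b, t)).comp
        ((ContinuousLinearMap.id ℝ (EuclideanSpace ℝ (Fin n))).prod
          (0 : EuclideanSpace ℝ (Fin n) →L[ℝ] (EuclideanSpace ℝ (Fin n) × ℝ)))) a := by
    exact (hd (a, b, t)).hasFDerivAt.comp a
      ((hasFDerivAt_id a).prodMk (hasFDerivAt_const (b, t) a))
  have h2 : HasFDerivAt (fun y : EuclideanSpace ℝ (Fin n) => L (a, y, t))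
      ((fderiv ℝ L (a, b, t)).comp
        ((0 : EuclideanSpace ℝ (Fin n) →L[ℝ] EuclideanSpace ℝ (Fin n)).prod
          ((ContinuousLinearMap.id ℝ (EuclideanSpace ℝ (Fin n))).prod
            (0 : EuclideanSpace ℝ (Fin n) →L[ℝ] ℝ)))) b := by
    exact (hd (a, b, t)).hasFDerivAt.comp b
      ((hasFDerivAt_const a b).prodMk ((hasFDerivAt_id b).prodMk (hasFDerivAt_const t b)))
  have e1 : ⟪grad1 L a b t, u⟫
      = fderiv ℝ (fun y : EuclideanSpace ℝ (Fin n) => L (y, b, t)) a u := by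
    rw [grad1, gradient, InnerProductSpace.toDual_symm_apply]
  have e2 : ⟪grad2 L a b t, w⟫
      = fderiv ℝ (fun y : EuclideanSpace ℝ (Fin n) => L (a, y, t)) b w := by
    rw [grad2, gradient, InnerProductSpace.toDual_symm_apply]
  rw [e1, e2, h1.fderiv, h2.fderiv]
  have : ((u, w, (0:ℝ)) : EuclideanSpace ℝ (Fin n) × EuclideanSpace ℝ (Fin n) × ℝ)
      = (u, 0, 0) + (0, w, 0) := by simp [Prod.ext_iff]
  rw [this, map_add]
  simp
  rfl

/-- first-variation formula for the asymmetrically embedded action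
with finite-difference evolution operators: the integrand is integrable for each
`s`, and the map `s ↦ ∫ [L(x+s·h, d⁺x+s·d⁻h, t) − L(x, d⁺x, t)]` is differentiable
at `s = 0` with derivative `∫ [∂₁L·h + ∂₂L·d⁻h]`. -/
theorem first_variation_asymmetric_action
    (ε : ℝ) (hε : 0 < ε) (n : ℕ) (hn : 1 ≤ n)
    (L : EuclideanSpace ℝ (Fin n) × EuclideanSpace ℝ (Fin n) × ℝ → ℝ)
    (hL : ContDiff ℝ 1 L)
    (x : ℝ → EuclideanSpace ℝ (Fin n)) (hx : Continuous x)
    (h : ℝ → EuclideanSpace ℝ (Fin n)) (hh : ContDiff ℝ (⊤ : ℕ∞) h)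
    (hhc : HasCompactSupport h) :
    (∀ s : ℝ, Integrable (fun t : ℝ =>
      L (x t + s • h t, backwardDiff ε x t + s • forwardDiff ε h t, t)
        - L (x t, backwardDiff ε x t, t))) ∧
    HasDerivAt
      (fun s : ℝ => ∫ t : ℝ,
        (L (x t + s • h t, backwardDiff ε x t + s • forwardDiff ε h t, t)
          - L (x t, backwardDiff ε x t, t)))
      (∫ t : ℝ,
        (⟪grad1 L (x t) (backwardDiff ε x t) t, h t⟫
          + ⟪grad2 L (x t) (backwardDiff ε x t) t, forwardDiff ε h t⟫))
      0 := by
  have hd : Differentiable ℝ L := hL.differentiable one_ne_zero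
  set bd : ℝ → EuclideanSpace ℝ (Fin n) := backwardDiff ε x with hbd_def
  set dh : ℝ → EuclideanSpace ℝ (Fin n) := forwardDiff ε h with hdh_def
  have hhcon : Continuous h := hh.continuous
  have hbd : Continuous bd := by
    simp only [hbd_def, backwardDiff]
    unfold backwardDiff
    fun_prop
  have hdh : Continuous dh := by
    simp only [hdh_def, forwardDiff]
    unfold forwardDiff
    fun_prop
  -- the compact set outside of which everything vanishes
  set K : Set ℝ := tsupport h with hK_def
  have hK : IsCompact K := hhc
  set S : Set ℝ := K ∪ ((fun t => t - ε) '' K) with hS_def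
  have hS : IsCompact S := hK.union (hK.image (continuous_id.sub continuous_const))
  have hSz : ∀ t ∉ S, h t = 0 ∧ dh t = 0 := by
    intro t ht
    have h1 : h t = 0 := image_eq_zero_of_notMem_tsupport (fun hc => ht (Or.inl hc))
    have h2 : h (t + ε) = 0 := by
      by_contra hc
      exact ht (Or.inr ⟨t + ε, subset_tsupport h hc, by ring⟩)
    exact ⟨h1, by simp [hdh_def, forwardDiff, h1, h2]⟩
  -- the path and the integrand
  set p : ℝ → ℝ → EuclideanSpace ℝ (Fin n) × EuclideanSpace ℝ (Fin n) × ℝ :=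
    fun s t => (x t + s • h t, bd t + s • dh t, t) with hp_def
  set F : ℝ → ℝ → ℝ := fun s t => L (p s t) - L (x t, bd t, t) with hF_def
  set F' : ℝ → ℝ → ℝ := fun s t => fderiv ℝ L (p s t) (h t, dh t, (0:ℝ)) with hF'_def
  have hpc : Continuous fun q : ℝ × ℝ => p q.1 q.2 := by
    refine ((hx.comp continuous_snd).add
      (continuous_fst.smul (hhcon.comp continuous_snd))).prodMk
      (((hbd.comp continuous_snd).add
        (continuous_fst.smul (hdh.comp continuous_snd))).prodMk continuous_snd)
  have hpsc : ∀ s : ℝ, Continuous fun t => p s t := fun s =>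
    (hpc.comp (Continuous.prodMk_right s))
  have hFc : ∀ s : ℝ, Continuous (F s) := by
    intro s
    exact (hL.continuous.comp (hpsc s)).sub
      (hL.continuous.comp (hx.prodMk (hbd.prodMk continuous_id)))
  have hFz : ∀ s : ℝ, ∀ t ∉ S, F s t = 0 := by
    intro s t ht
    obtain ⟨h1, h2⟩ := hSz t ht
    simp [hF_def, hp_def, h1, h2]
  have hInt : ∀ s : ℝ, Integrable (F s) := by
    intro s
    exact (hFc s).integrable_of_hasCompactSupport
      (HasCompactSupport.intro hS (hFz s))
  -- derivative in s
  have hder : ∀ t : ℝ, ∀ s : ℝ, HasDerivAt (fun s' => F s' t) (F' s t) s := by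
    intro t s
    have hc : HasDerivAt (fun s' : ℝ => p s' t) (h t, dh t, (0:ℝ)) s := by
      have h1 : HasDerivAt (fun s' : ℝ => x t + s' • h t) (h t) s := by
        simpa using ((hasDerivAt_id s).smul_const (h t)).const_add (x t)
      have h2 : HasDerivAt (fun s' : ℝ => bd t + s' • dh t) (dh t) s := by
        simpa using ((hasDerivAt_id s).smul_const (dh t)).const_add (bd t)
      exact h1.prodMk (h2.prodMk (hasDerivAt_const s t))
    exact ((hd (p s t)).hasFDerivAt.comp_hasDerivAt s hc).sub_const _
  -- bound for the derivative on the ball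
  have hF'z : ∀ s : ℝ, ∀ t ∉ S, F' s t = 0 := by
    intro s t ht
    obtain ⟨h1, h2⟩ := hSz t ht
    have : ((h t, dh t, (0:ℝ)) :
        EuclideanSpace ℝ (Fin n) × EuclideanSpace ℝ (Fin n) × ℝ) = 0 := by
      simp [h1, h2, Prod.ext_iff]
    simp [hF'_def, this]
  have hfd : Continuous (fderiv ℝ L) := (hL.continuous_fderiv one_ne_zero)
  have hF'c2 : Continuous fun q : ℝ × ℝ => F' q.1 q.2 := by
    exact (hfd.comp hpc).clm_apply
      (((hhcon.comp continuous_snd)).prodMk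
        ((hdh.comp continuous_snd).prodMk continuous_const))
  obtain ⟨M, hM⟩ := ((isCompact_Icc (a := (-1:ℝ)) (b := 1)).prod hS).exists_bound_of_continuousOn
    hF'c2.continuousOn
  set bound : ℝ → ℝ := S.indicator fun _ => M with hbound_def
  have hbound : ∀ t : ℝ, ∀ s ∈ Metric.ball (0:ℝ) 1, ‖F' s t‖ ≤ bound t := by
    intro t s hs
    by_cases htS : t ∈ S
    · have hsI : s ∈ Set.Icc (-1:ℝ) 1 := by
        rw [Metric.mem_ball, Real.dist_eq, sub_zero] at hs
        constructor <;> [linarith [neg_abs_le s]; linarith [le_abs_self s]]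
      have := hM (s, t) ⟨hsI, htS⟩
      rwa [hbound_def, Set.indicator_of_mem htS]
    · rw [hbound_def, Set.indicator_of_notMem htS, hF'z s t htS]
      simp
  have hbound_int : Integrable bound := by
    rw [hbound_def, integrable_indicator_iff hS.measurableSet]
    exact integrableOn_const hS.measure_lt_top.ne
  -- apply the dominated differentiation theorem
  have key := hasDerivAt_integral_of_dominated_loc_of_deriv_le (F := F) (F' := F')
    (x₀ := (0:ℝ)) (bound := bound) (Metric.ball_mem_nhds _ one_pos)
    (Filter.Eventually.of_forall fun s => (hFc s).aestronglyMeasurable)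
    (hInt 0)
    ((hF'c2.comp (Continuous.prodMk_right (0:ℝ))).aestronglyMeasurable)
    (Filter.Eventually.of_forall fun t => fun s hs => hbound t s hs)
    hbound_int
    (Filter.Eventually.of_forall fun t => fun s _ => hder t s)
  refine ⟨hInt, ?_⟩
  have hrw : (fun t => F' 0 t) = fun t =>
      ⟪grad1 L (x t) (bd t) t, h t⟫ + ⟪grad2 L (x t) (bd t) t, dh t⟫ := by
    funext t
    have hp0 : p 0 t = (x t, bd t, t) := by simp [hp_def]
    rw [hF'_def]
    simp only [hp0]
    exact fderiv_apply_eq_inner L hL (x t) (bd t) t (h t) (dh t)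
  rw [← hrw]
  exact key.2


end
end

section
/- Let f ∈ C_c^∞(ℝ, ℝ). Then the function g = D₋^{1/2} f, i.e. g(t) = −(1/√π) · (d/dt) ∫_t^{+∞} (u−t)^{−1/2} f(u) du, is well defined for all t ∈ ℝ, the derivative D₋^{1/2} g is well defined for all t ∈ ℝ, and for every t ∈ ℝ, (D₋^{1/2}(D₋^{1/2} f))(t) = −f'(t). (Composition of two right Riemann–Liouville half-derivatives with upper limit +∞ gives the right Riemann–Liouville derivative of order 1, which is minus the usual first derivative: D₋^{1/2} ∘ D₋^{1/2} = −d/dt.) -/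
open MeasureTheory

noncomputable section

/-- The improper integral `s ↦ ∫_{−∞}^s (s−u)^{−β} f(u) du` appearing in the left
Riemann–Liouville fractional derivative with lower limit `−∞`. -/
def leftRLint (β : ℝ) (f : ℝ → ℝ) (s : ℝ) : ℝ :=
  ∫ u in Set.Iic s, (s - u) ^ (-β) * f u

/-- Left Riemann–Liouville fractional derivative of order `β` with lower limit `−∞`:
`(D₊^β f)(t) = (1/Γ(1−β)) · (d/dt) ∫_{−∞}^t (t−u)^{−β} f(u) du`.
(For `β = 1/2`, `Γ(1/2) = √π`.) -/
def leftRL (β : ℝ) (f : ℝ → ℝ) (t : ℝ) : ℝ :=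
  (1 / Real.Gamma (1 - β)) * deriv (leftRLint β f) t

/-- The improper integral `s ↦ ∫_s^{+∞} (u−s)^{−β} f(u) du` appearing in the right
Riemann–Liouville fractional derivative with upper limit `+∞`. -/
def rightRLint (β : ℝ) (f : ℝ → ℝ) (s : ℝ) : ℝ :=
  ∫ u in Set.Ici s, (u - s) ^ (-β) * f u

/-- Right Riemann–Liouville fractional derivative of order `β` with upper limit `+∞`:
`(D₋^β f)(t) = −(1/Γ(1−β)) · (d/dt) ∫_t^{+∞} (u−t)^{−β} f(u) du`.
(For `β = 1/2`, `Γ(1/2) = √π`.) -/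
def rightRL (β : ℝ) (f : ℝ → ℝ) (t : ℝ) : ℝ :=
  -(1 / Real.Gamma (1 - β)) * deriv (rightRLint β f) t

/-- Well-definedness of the left RL derivative `D₊^β f` at every `t ∈ ℝ`:
the improper integral converges and the resulting function is differentiable. -/
def leftRLWellDefined (β : ℝ) (f : ℝ → ℝ) : Prop :=
  (∀ t : ℝ, IntegrableOn (fun u => (t - u) ^ (-β) * f u) (Set.Iic t)) ∧
  (∀ t : ℝ, DifferentiableAt ℝ (leftRLint β f) t)

/-- Well-definedness of the right RL derivative `D₋^β f` at every `t ∈ ℝ`: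
the improper integral converges and the resulting function is differentiable. -/
def rightRLWellDefined (β : ℝ) (f : ℝ → ℝ) : Prop :=
  (∀ t : ℝ, IntegrableOn (fun u => (u - t) ^ (-β) * f u) (Set.Ici t)) ∧
  (∀ t : ℝ, DifferentiableAt ℝ (rightRLint β f) t)

open Set
namespace RLaux

/-- The half-derivative kernel. Note `v ^ (-(1/2) : ℝ) = 0` for `v ≤ 0`. -/
def K (v : ℝ) : ℝ := v ^ (-(1/2) : ℝ)

lemma K_of_nonpos {v : ℝ} (h : v ≤ 0) : K v = 0 := by
  rcases h.lt_or_eq with h | h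
  · rw [K, Real.rpow_def_of_neg h]
    have : Real.cos (-(1/2) * Real.pi) = 0 := by
      rw [show (-(1/2) : ℝ) * Real.pi = -(Real.pi/2) by ring, Real.cos_neg, Real.cos_pi_div_two]
    rw [this, mul_zero]
  · rw [h, K, Real.zero_rpow (by norm_num)]

lemma K_nonneg (v : ℝ) : 0 ≤ K v := by
  rcases le_or_gt v 0 with h | h
  · rw [K_of_nonpos h]
  · exact Real.rpow_nonneg h.le _

lemma K_meas : Measurable K := by unfold K; fun_prop

lemma K_intervalIntegrable (a b : ℝ) : IntervalIntegrable K volume a b :=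
  intervalIntegral.intervalIntegrable_rpow' (by norm_num)

lemma K_integral {c : ℝ} (_hc : 0 ≤ c) : ∫ v in (0:ℝ)..c, K v = 2 * Real.sqrt c := by
  have h := integral_rpow (a := 0) (b := c) (r := -(1/2)) (Or.inl (by norm_num))
  have h2 : ∫ v in (0:ℝ)..c, K v = (c ^ ((-(1/2):ℝ) + 1) - (0:ℝ) ^ ((-(1/2):ℝ) + 1)) / ((-(1/2):ℝ) + 1) := h
  rw [h2]
  rw [show ((-(1/2):ℝ) + 1) = (1/2 : ℝ) by norm_num, Real.zero_rpow (by norm_num),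
    ← Real.sqrt_eq_rpow]
  ring


/-- Translated kernel is interval integrable. -/
lemma K_shift_intervalIntegrable (t a b : ℝ) :
    IntervalIntegrable (fun u => K (u - t)) volume a b := by
  have h := (K_intervalIntegrable (a - t) (b - t)).comp_sub_right t
  simpa using h

lemma K_shift_integrableOn_Icc (t a b : ℝ) (hab : a ≤ b) :
    IntegrableOn (fun u => K (u - t)) (Icc a b) :=
  (intervalIntegrable_iff_integrableOn_Icc_of_le hab).mp (K_shift_intervalIntegrable t a b)

/-- Integral of translated kernel over `Ioc u b`. -/
lemma K_shift_integral {u b : ℝ} (hub : u ≤ b) :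
    ∫ w in Ioc u b, K (w - u) = 2 * Real.sqrt (b - u) := by
  rw [← intervalIntegral.integral_of_le hub]
  have h := intervalIntegral.integral_comp_sub_right (a := u) (b := b) K u
  simpa [h] using K_integral (c := b - u) (by linarith)

/-- Lemma A : the kernel times a continuous function vanishing above `b` is integrable. -/
lemma integrable_K_mul {h : ℝ → ℝ} (hh : Continuous h) {b : ℝ} (t : ℝ)
    (hb : ∀ u, b < u → h u = 0) :
    Integrable (fun u => K (u - t) * h u) := by
  have hsupp : Function.support (fun u => K (u - t) * h u) ⊆ Icc t b := by
    intro u hu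
    simp only [Function.mem_support] at hu
    constructor
    · by_contra hlt
      exact hu (by rw [K_of_nonpos (by linarith [lt_of_not_ge hlt] : u - t ≤ 0), zero_mul])
    · by_contra hlt
      exact hu (by rw [hb u (lt_of_not_ge hlt), mul_zero])
  rw [← integrableOn_iff_integrable_of_support_subset hsupp]
  rcases le_or_gt t b with hab | hab
  · obtain ⟨M, hM⟩ := (isCompact_Icc (a := t) (b := b)).exists_bound_of_continuousOn
      hh.continuousOn
    refine Integrable.mono' (((K_shift_integrableOn_Icc t t b hab).const_mul M))
      (((K_meas.comp (measurable_id.sub_const t)).mul hh.measurable).aestronglyMeasurable.restrict)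
      ?_
    refine (ae_restrict_iff' measurableSet_Icc).2 (ae_of_all _ fun u hu => ?_)
    rw [norm_mul, Real.norm_of_nonneg (K_nonneg _)]
    calc K (u - t) * ‖h u‖ ≤ K (u - t) * M :=
          mul_le_mul_of_nonneg_left (hM u hu) (K_nonneg _)
      _ = M * K (u - t) := mul_comm _ _
  · rw [Icc_eq_empty (by linarith)]
    exact integrableOn_empty

/-- The inner integral bound: `∫ w, K (w-u) * |h w| ≤ 2 M √(b-u)`. -/
lemma K_mul_abs_integral_le {h : ℝ → ℝ} (hh : Continuous h) {b M : ℝ}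
    (hb : ∀ u, b < u → h u = 0) (hM : ∀ u, |h u| ≤ M) {u : ℝ} (hub : u ≤ b) :
    ∫ w, K (w - u) * |h w| ≤ 2 * M * Real.sqrt (b - u) := by
  have habs : Continuous fun w => |h w| := hh.abs
  have hbabs : ∀ w, b < w → |h w| = 0 := fun w hw => by rw [hb w hw, abs_zero]
  have hzero : ∀ w, w ∉ Ioc u b → K (w - u) * |h w| = 0 := by
    intro w hw
    rcases not_and_or.mp hw with hw | hw
    · rw [K_of_nonpos (by linarith [le_of_not_gt hw] : w - u ≤ 0), zero_mul]
    · rw [hbabs w (lt_of_not_ge hw), mul_zero]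
  rw [← setIntegral_eq_integral_of_forall_compl_eq_zero hzero]
  have hint1 : IntegrableOn (fun w => K (w - u) * |h w|) (Ioc u b) :=
    (integrable_K_mul habs u hbabs).integrableOn
  have hint2 : IntegrableOn (fun w => K (w - u) * M) (Ioc u b) :=
    ((intervalIntegrable_iff_integrableOn_Ioc_of_le hub).mp
      (K_shift_intervalIntegrable u u b)).mul_const M
  calc ∫ w in Ioc u b, K (w - u) * |h w|
      ≤ ∫ w in Ioc u b, K (w - u) * M := by
        refine setIntegral_mono_on hint1 hint2 measurableSet_Ioc fun w _ => ?_
        exact mul_le_mul_of_nonneg_left (hM w) (K_nonneg _)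
    _ = (∫ w in Ioc u b, K (w - u)) * M := by rw [integral_mul_const]
    _ = 2 * Real.sqrt (b - u) * M := by rw [K_shift_integral hub]
    _ = 2 * M * Real.sqrt (b - u) := by ring


/-- Translation form of the kernel integral. -/
lemma K_integral_shift (h : ℝ → ℝ) (s : ℝ) :
    ∫ u, K (u - s) * h u = ∫ v, K v * h (v + s) := by
  have := MeasureTheory.integral_add_right_eq_self (μ := volume)
    (fun u => K (u - s) * h u) s
  rw [← this]
  simp

/-- ENGINE: derivative of the kernel integral. -/
lemma hasDerivAt_K_int {h h' : ℝ → ℝ} (hd : ∀ x, HasDerivAt h (h' x) x)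
    (hh : Continuous h) (hh' : Continuous h') {b : ℝ}
    (hb : ∀ u, b < u → h u = 0) (hb' : ∀ u, b < u → h' u = 0) (t : ℝ) :
    HasDerivAt (fun s => ∫ u, K (u - s) * h u) (∫ u, K (u - t) * h' u) t := by
  rw [show (fun s => ∫ u, K (u - s) * h u) = fun s => ∫ v, K v * h (v + s) from
    funext fun s => K_integral_shift h s, K_integral_shift h' t]
  set c : ℝ := max (b - t + 1) 0 with hc
  have hc0 : 0 ≤ c := le_max_right _ _
  have hcb : b - t + 1 ≤ c := le_max_left _ _
  obtain ⟨M, hM⟩ := (isCompact_Icc (a := t - 1) (b := t + 1 + c)).exists_bound_of_continuousOn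
    hh'.continuousOn
  have key := hasDerivAt_integral_of_dominated_loc_of_deriv_le (μ := volume)
    (F := fun s v => K v * h (v + s)) (F' := fun s v => K v * h' (v + s))
    (x₀ := t) (s := Metric.ball t 1) (bound := Set.indicator (Icc 0 c) (fun v => M * K v))
    (Metric.ball_mem_nhds t one_pos)
    (Filter.Eventually.of_forall fun s =>
      (K_meas.mul (hh.measurable.comp (measurable_id.add_const s))).aestronglyMeasurable)
    (by
      have h0 := (integrable_K_mul hh t hb).comp_add_right t
      simpa using h0)
    ((K_meas.mul (hh'.measurable.comp (measurable_id.add_const t))).aestronglyMeasurable)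
    (ae_of_all _ fun v s hs => by
      show ‖K v * h' (v + s)‖ ≤ Set.indicator (Icc 0 c) (fun v => M * K v) v
      by_cases hv : v ∈ Icc 0 c
      · rw [Set.indicator_of_mem hv]
        rw [norm_mul, Real.norm_of_nonneg (K_nonneg v)]
        rw [Metric.mem_ball, Real.dist_eq, abs_sub_lt_iff] at hs
        have hmem : v + s ∈ Icc (t - 1) (t + 1 + c) := by
          constructor <;> [linarith [hv.1, hs.1, hs.2]; linarith [hv.2, hs.1, hs.2]]
        calc K v * ‖h' (v + s)‖ ≤ K v * M :=
              mul_le_mul_of_nonneg_left (hM _ hmem) (K_nonneg _)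
          _ = M * K v := mul_comm _ _
      · rw [Set.indicator_of_notMem hv]
        rw [Metric.mem_ball, Real.dist_eq, abs_sub_lt_iff] at hs
        rw [Set.mem_Icc] at hv
        rcases not_and_or.mp hv with hv0 | hvc
        · rw [K_of_nonpos (le_of_not_ge hv0), zero_mul, norm_zero]
        · have : b < v + s := by
            have h1 := lt_of_not_ge hvc
            linarith [hs.1, hs.2]
          rw [hb' _ this, mul_zero, norm_zero])
    ((show IntegrableOn (fun v => M * K v) (Icc 0 c) volume from
      ((intervalIntegrable_iff_integrableOn_Icc_of_le hc0).mp
        (K_intervalIntegrable 0 c)).const_mul M).integrable_indicator measurableSet_Icc)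
    (ae_of_all _ fun v s _ => by
      have hinner : HasDerivAt (fun s : ℝ => v + s) 1 s := by
        simpa using (hasDerivAt_id s).const_add v
      have := ((hd (v + s)).comp s hinner).const_mul (K v)
      simpa using this)
  exact key.2


lemma K_pos_eq {x : ℝ} (hx : 0 < x) : K x = (Real.sqrt x)⁻¹ := by
  rw [K, show (-(1/2) : ℝ) = -(1/2) from rfl, Real.rpow_neg hx.le, ← Real.sqrt_eq_rpow]

/-- The beta integral: `∫ u, K (u-t) * K (w-u) = π` for `t < w`. -/
lemma beta_pi {t w : ℝ} (htw : t < w) : ∫ u, K (u - t) * K (w - u) = Real.pi := by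
  have hc : (0:ℝ) < w - t := by linarith
  have hzero : ∀ u, u ∉ Ioc t w → K (u - t) * K (w - u) = 0 := by
    intro u hu
    rcases not_and_or.mp hu with h1 | h1
    · rw [K_of_nonpos (by linarith [le_of_not_gt h1] : u - t ≤ 0), zero_mul]
    · rw [K_of_nonpos (by linarith [lt_of_not_ge h1] : w - u ≤ 0), mul_zero]
  rw [← setIntegral_eq_integral_of_forall_compl_eq_zero hzero,
    ← intervalIntegral.integral_of_le htw.le]
  set G : ℝ → ℝ := fun u => Real.arcsin ((2*u - t - w)/(w - t)) with hGdef
  have hG : ∀ u ∈ Ioo t w, HasDerivAt G (K (u - t) * K (w - u)) u := by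
    intro u hu
    have h1 : (0:ℝ) < u - t := by linarith [hu.1]
    have h2 : (0:ℝ) < w - u := by linarith [hu.2]
    set y : ℝ := (2*u - t - w)/(w - t) with hy
    have hy1 : -1 < y := by
      rw [hy, lt_div_iff₀ hc]; linarith
    have hy2 : y < 1 := by
      rw [hy, div_lt_one hc]; linarith
    have hinner : HasDerivAt (fun u : ℝ => (2*u - t - w)/(w - t)) (2/(w - t)) u := by
      have : HasDerivAt (fun u : ℝ => 2*u - t - w) 2 u := by
        simpa using (((hasDerivAt_id u).const_mul (2:ℝ)).sub_const t).sub_const w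
      exact this.div_const _
    have harc := Real.hasDerivAt_arcsin (ne_of_gt hy1) (ne_of_lt hy2)
    have hcomp : HasDerivAt G (1/Real.sqrt (1 - y^2) * (2/(w - t))) u := by
      have := harc.comp u hinner; exact this
    convert hcomp using 1
    have hyy : 1 - y^2 = 4*(u - t)*(w - u)/(w - t)^2 := by
      rw [hy]; field_simp; ring
    have hsq : Real.sqrt (1 - y^2) = 2 * Real.sqrt (u - t) * Real.sqrt (w - u) / (w - t) := by
      rw [hyy, show 4*(u - t)*(w - u)/(w - t)^2
          = (2 * Real.sqrt (u - t) * Real.sqrt (w - u) / (w - t))^2 from by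
        rw [div_pow, mul_pow, mul_pow, Real.sq_sqrt h1.le, Real.sq_sqrt h2.le]; ring,
        Real.sqrt_sq (by positivity)]
    rw [hsq, K_pos_eq h1, K_pos_eq h2]
    have e1 : Real.sqrt (u - t) ≠ 0 := by positivity
    have e2 : Real.sqrt (w - u) ≠ 0 := by positivity
    have e3 : (w - t) ≠ 0 := ne_of_gt hc
    field_simp
  have hGc : ContinuousOn G (Icc t w) := by
    apply Continuous.continuousOn
    exact Real.continuous_arcsin.comp (by continuity)
  have hint : IntervalIntegrable (fun u => K (u - t) * K (w - u)) volume t w := by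
    set m : ℝ := (t + w)/2 with hm
    have htm : t < m := by rw [hm]; linarith
    have hmw : m < w := by rw [hm]; linarith
    have hmeas2 : Measurable fun u => K (u - t) * K (w - u) :=
      (K_meas.comp (measurable_id.sub_const t)).mul
        (K_meas.comp (measurable_const.sub measurable_id))
    have i1 : IntervalIntegrable (fun u => K (u - t) * K (w - u)) volume t m := by
      rw [intervalIntegrable_iff_integrableOn_Ioc_of_le htm.le]
      refine Integrable.mono'
        (((intervalIntegrable_iff_integrableOn_Ioc_of_le htm.le).mp
          (K_shift_intervalIntegrable t t m)).mul_const (K (w - m)))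
        hmeas2.aestronglyMeasurable.restrict
        ((ae_restrict_iff' measurableSet_Ioc).2 (ae_of_all _ fun u hu => ?_))
      rw [norm_mul, Real.norm_of_nonneg (K_nonneg _), Real.norm_of_nonneg (K_nonneg _)]
      refine mul_le_mul_of_nonneg_left ?_ (K_nonneg _)
      exact Real.rpow_le_rpow_of_nonpos (by linarith [hu.2, hmw] : (0:ℝ) < w - m)
        (by linarith [hu.2] : w - m ≤ w - u) (by norm_num)
    have i2 : IntervalIntegrable (fun u => K (u - t) * K (w - u)) volume m w := by
      rw [intervalIntegrable_iff_integrableOn_Ioc_of_le hmw.le]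
      have hK2 : IntegrableOn (fun u => K (w - u)) (Ioc m w) := by
        have h0 := ((K_intervalIntegrable 0 (w - m)).comp_sub_left w).symm
        have h1 : IntervalIntegrable (fun u => K (w - u)) volume m w := by simpa using h0
        exact (intervalIntegrable_iff_integrableOn_Ioc_of_le hmw.le).mp h1
      refine Integrable.mono' ((hK2.const_mul (K (m - t))))
        hmeas2.aestronglyMeasurable.restrict
        ((ae_restrict_iff' measurableSet_Ioc).2 (ae_of_all _ fun u hu => ?_))
      rw [norm_mul, Real.norm_of_nonneg (K_nonneg _), Real.norm_of_nonneg (K_nonneg _)]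
      refine mul_le_mul_of_nonneg_right ?_ (K_nonneg _)
      exact Real.rpow_le_rpow_of_nonpos (by linarith [hu.1, htm] : (0:ℝ) < m - t)
        (by linarith [hu.1] : m - t ≤ u - t) (by norm_num)
    exact i1.trans i2
  rw [intervalIntegral.integral_eq_sub_of_hasDeriv_right_of_le htw.le hGc
    (fun u hu => (hG u hu).hasDerivWithinAt) hint]
  have hGw : G w = Real.pi / 2 := by
    have h1 : (2*w - t - w)/(w - t) = 1 := by field_simp; ring
    simp only [hGdef]
    rw [h1, Real.arcsin_one]
  have hGt : G t = -(Real.pi / 2) := by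
    have h1 : (2*t - t - w)/(w - t) = -1 := by field_simp; ring
    simp only [hGdef]
    rw [h1, Real.arcsin_neg_one]
  rw [hGw, hGt]; ring

end RLaux

open RLaux

/-- composition of two right Riemann–Liouville half-derivatives with
upper limit `+∞` gives minus the usual first derivative. For `f ∈ C_c^∞(ℝ, ℝ)`, the
function `g = D₋^{1/2} f` (with `1/Γ(1/2) = 1/√π`) is well defined everywhere,
`D₋^{1/2} g` is well defined everywhere, and `(D₋^{1/2}(D₋^{1/2} f))(t) = −f'(t)`
for every `t`. -/
theorem right_half_derivative_squared
    (f : ℝ → ℝ) (hf : ContDiff ℝ (⊤ : ℕ∞) f) (hfc : HasCompactSupport f)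
    (g : ℝ → ℝ) (hg : g = rightRL (1/2) f) :
    rightRLWellDefined (1/2) f ∧ rightRLWellDefined (1/2) g ∧
    ∀ t : ℝ, rightRL (1/2) g t = -deriv f t := by
  have hftop : ContDiff ℝ ((⊤ : ℕ∞) : WithTop ℕ∞) f := hf.of_le (by simp)
  have hfd : Differentiable ℝ f := hf.differentiable (by simp)
  have hf1 : ∀ x, HasDerivAt f (deriv f x) x := fun x => (hfd x).hasDerivAt
  have hf'cd : ContDiff ℝ ((⊤ : ℕ∞) : WithTop ℕ∞) (deriv f) :=
    (contDiff_infty_iff_deriv.mp hftop).2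
  have contf : Continuous f := hf.continuous
  have contf' : Continuous (deriv f) := hf'cd.continuous
  have hf'd : Differentiable ℝ (deriv f) := (contDiff_infty_iff_deriv.mp hf'cd).1
  have hf2 : ∀ x, HasDerivAt (deriv f) (deriv (deriv f) x) x :=
    fun x => (hf'd x).hasDerivAt
  have contf'' : Continuous (deriv (deriv f)) := (contDiff_infty_iff_deriv.mp hf'cd).2.continuous
  have hfc' : HasCompactSupport (deriv f) := hfc.deriv
  have hfc'' : HasCompactSupport (deriv (deriv f)) := hfc'.deriv
  -- choose `b` above all supports
  obtain ⟨b, hrb⟩ := (((hfc.isCompact.union hfc'.isCompact).union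
    hfc''.isCompact)).isBounded.subset_closedBall 0
  have hmemb : ∀ u : ℝ, b < u → u ∉ Metric.closedBall (0:ℝ) b := by
    intro u hu hmem
    rw [Metric.mem_closedBall, Real.dist_eq, sub_zero] at hmem
    exact absurd (le_trans (le_abs_self u) hmem) (not_le.2 hu)
  have hbf : ∀ u, b < u → f u = 0 := fun u hu =>
    image_eq_zero_of_notMem_tsupport (fun hmem => hmemb u hu (hrb (Or.inl (Or.inl hmem))))
  have hbf' : ∀ u, b < u → deriv f u = 0 := fun u hu =>
    image_eq_zero_of_notMem_tsupport (fun hmem => hmemb u hu (hrb (Or.inl (Or.inr hmem))))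
  have hbf'' : ∀ u, b < u → deriv (deriv f) u = 0 := fun u hu =>
    image_eq_zero_of_notMem_tsupport (fun hmem => hmemb u hu (hrb (Or.inr hmem)))
  -- global bound for `deriv f`
  obtain ⟨M, hM⟩ := hfc'.exists_bound_of_continuous contf'
  have hM' : ∀ x, |deriv f x| ≤ M := fun x => (Real.norm_eq_abs _) ▸ hM x
  have hM0 : (0:ℝ) ≤ M := le_trans (norm_nonneg _) (hM 0)
  -- rewrite `rightRLint` as a kernel integral over the whole line
  have eqint : ∀ h : ℝ → ℝ, rightRLint (1/2) h = fun s => ∫ u, K (u - s) * h u := by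
    intro h
    funext s
    show ∫ u in Set.Ici s, (u - s) ^ (-(1/2:ℝ)) * h u = ∫ u, K (u - s) * h u
    exact setIntegral_eq_integral_of_forall_compl_eq_zero fun u hu => by
      show K (u - s) * h u = 0
      rw [K_of_nonpos (by simp only [Set.mem_Ici, not_le] at hu; linarith), zero_mul]
  have hIf : ∀ t, HasDerivAt (rightRLint (1/2) f) (∫ u, K (u - t) * deriv f u) t := by
    intro t
    rw [eqint f]
    exact hasDerivAt_K_int hf1 contf contf' hbf hbf' t
  have hgdef : ∀ t, g t = -(1/Real.sqrt Real.pi) * ∫ u, K (u - t) * deriv f u := by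
    intro t
    rw [hg]
    show -(1 / Real.Gamma (1 - 1/2)) * deriv (rightRLint (1/2) f) t = _
    rw [show (1 - 1/2 : ℝ) = 1/2 by norm_num, Real.Gamma_one_half_eq, (hIf t).deriv]
  have hIf' : ∀ t, HasDerivAt (fun s => ∫ u, K (u - s) * deriv f u)
      (∫ u, K (u - t) * deriv (deriv f) u) t :=
    fun t => hasDerivAt_K_int hf2 contf' contf'' hbf' hbf'' t
  have contg : Continuous g := by
    rw [funext hgdef]
    exact continuous_const.mul (continuous_iff_continuousAt.2 fun t => (hIf' t).continuousAt)
  have hbg : ∀ u, b < u → g u = 0 := by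
    intro u hu
    rw [hgdef u]
    have hz : (fun w => K (w - u) * deriv f w) = fun _ => (0:ℝ) := by
      funext w
      rcases le_or_gt w u with hw | hw
      · rw [K_of_nonpos (by linarith), zero_mul]
      · rw [hbf' w (by linarith), mul_zero]
    rw [hz, integral_zero, mul_zero]
  -- the Fubini computation
  have hIoi : ∀ t : ℝ, ∫ w in Set.Ioi t, deriv f w = 0 - f t := by
    intro t
    apply MeasureTheory.integral_Ioi_of_hasDerivAt_of_tendsto contf.continuousWithinAt
      (fun x _ => hf1 x) ((contf'.integrable_of_hasCompactSupport hfc').integrableOn)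
    refine Filter.Tendsto.congr' ?_ tendsto_const_nhds
    exact Filter.eventually_atTop.2 ⟨b + 1, fun u hu => (hbf u (by linarith)).symm⟩
  have key : ∀ t : ℝ, (∫ u, K (u - t) * g u) = Real.sqrt Real.pi * f t := by
    intro t
    have hFm : AEStronglyMeasurable
        (Function.uncurry fun u w => K (u - t) * (K (w - u) * deriv f w))
        (volume.prod volume) := by
      apply Measurable.aestronglyMeasurable
      show Measurable fun p : ℝ × ℝ => K (p.1 - t) * (K (p.2 - p.1) * deriv f p.2)
      exact (K_meas.comp (measurable_fst.sub measurable_const)).mul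
        ((K_meas.comp (measurable_snd.sub measurable_fst)).mul
          (contf'.measurable.comp measurable_snd))
    have hFub : Integrable
        (Function.uncurry fun u w => K (u - t) * (K (w - u) * deriv f w))
        (volume.prod volume) := by
      rw [MeasureTheory.integrable_prod_iff hFm]
      constructor
      · refine ae_of_all _ fun u => ?_
        simpa using ((integrable_K_mul contf' u hbf').const_mul (K (u - t)))
      · set C := 2 * M * Real.sqrt (b - t) with hC
        have hC0 : (0:ℝ) ≤ C := by
          rw [hC]; exact mul_nonneg (mul_nonneg (by norm_num) hM0) (Real.sqrt_nonneg _)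
        refine Integrable.mono'
          (g := Set.indicator (Set.Icc t b) fun u => C * K (u - t)) ?_
          hFm.norm.integral_prod_right' (ae_of_all _ fun u => ?_)
        · rcases le_or_gt t b with hab | hab
          · exact (show IntegrableOn (fun u => C * K (u - t)) (Set.Icc t b) volume from
              (K_shift_integrableOn_Icc t t b hab).const_mul C).integrable_indicator
              measurableSet_Icc
          · rw [Set.Icc_eq_empty (not_le.2 hab), Set.indicator_empty]
            exact integrable_zero _ _ _
        · have hindnn : (0:ℝ) ≤ Set.indicator (Set.Icc t b) (fun u => C * K (u - t)) u :=
            Set.indicator_nonneg (fun x _ => mul_nonneg hC0 (K_nonneg _)) u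
          rw [Real.norm_of_nonneg (integral_nonneg fun w => norm_nonneg _)]
          have heq : (fun w => ‖Function.uncurry
                (fun u w => K (u - t) * (K (w - u) * deriv f w)) (u, w)‖)
              = fun w => K (u - t) * (K (w - u) * |deriv f w|) := by
            funext w
            simp only [Function.uncurry_apply_pair, norm_mul]
            rw [Real.norm_of_nonneg (K_nonneg _), Real.norm_of_nonneg (K_nonneg _),
              Real.norm_eq_abs]
          rw [heq, MeasureTheory.integral_const_mul]
          rcases le_or_gt u t with h1 | h1
          · rw [K_of_nonpos (by linarith), zero_mul]
            exact hindnn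
          rcases le_or_gt u b with h2 | h2
          · rw [Set.indicator_of_mem (Set.mem_Icc.2 ⟨h1.le, h2⟩)]
            have hA := K_mul_abs_integral_le contf' hbf' hM' h2
            calc K (u - t) * ∫ w, K (w - u) * |deriv f w|
                ≤ K (u - t) * (2 * M * Real.sqrt (b - u)) :=
                  mul_le_mul_of_nonneg_left hA (K_nonneg _)
              _ ≤ K (u - t) * C := by
                  refine mul_le_mul_of_nonneg_left ?_ (K_nonneg _)
                  rw [hC]
                  exact mul_le_mul_of_nonneg_left (Real.sqrt_le_sqrt (by linarith))
                    (mul_nonneg (by norm_num) hM0)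
              _ = C * K (u - t) := mul_comm _ _
          · have hz : (fun w => K (w - u) * |deriv f w|) = fun _ => (0:ℝ) := by
              funext w
              rcases le_or_gt w u with hw | hw
              · rw [K_of_nonpos (by linarith), zero_mul]
              · rw [hbf' w (by linarith), abs_zero, mul_zero]
            rw [hz, integral_zero, mul_zero]
            exact hindnn
    have inner_eval : ∀ w : ℝ, (∫ u, K (u - t) * (K (w - u) * deriv f w))
        = Set.indicator (Set.Ioi t) (fun w => Real.pi * deriv f w) w := by
      intro w
      rcases lt_or_ge t w with hw | hw
      · rw [Set.indicator_of_mem (Set.mem_Ioi.2 hw)]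
        calc ∫ u, K (u - t) * (K (w - u) * deriv f w)
            = ∫ u, (K (u - t) * K (w - u)) * deriv f w := by
              congr 1; funext u; ring
          _ = (∫ u, K (u - t) * K (w - u)) * deriv f w :=
              MeasureTheory.integral_mul_const _ _
          _ = Real.pi * deriv f w := by rw [beta_pi hw]
      · rw [Set.indicator_of_notMem (by simpa using not_lt.2 hw)]
        have hz : (fun u => K (u - t) * (K (w - u) * deriv f w)) = fun _ => (0:ℝ) := by
          funext u
          rcases le_or_gt u t with hu | hu
          · rw [K_of_nonpos (by linarith), zero_mul]
          · rw [K_of_nonpos (by linarith : w - u ≤ 0), zero_mul, mul_zero]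
        rw [hz, integral_zero]
    calc ∫ u, K (u - t) * g u
        = ∫ u, -(1/Real.sqrt Real.pi) *
            ∫ w, K (u - t) * (K (w - u) * deriv f w) := by
          congr 1
          funext u
          rw [hgdef u, MeasureTheory.integral_const_mul]
          ring
      _ = -(1/Real.sqrt Real.pi) *
            ∫ u, ∫ w, K (u - t) * (K (w - u) * deriv f w) :=
          MeasureTheory.integral_const_mul _ _
      _ = -(1/Real.sqrt Real.pi) *
            ∫ w, ∫ u, K (u - t) * (K (w - u) * deriv f w) := by
          rw [MeasureTheory.integral_integral_swap hFub]
      _ = -(1/Real.sqrt Real.pi) *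
            ∫ w, Set.indicator (Set.Ioi t) (fun w => Real.pi * deriv f w) w := by
          congr 1
          exact integral_congr_ae (ae_of_all _ inner_eval)
      _ = -(1/Real.sqrt Real.pi) * (Real.pi * ∫ w in Set.Ioi t, deriv f w) := by
          rw [MeasureTheory.integral_indicator measurableSet_Ioi,
            MeasureTheory.integral_const_mul]
      _ = -(1/Real.sqrt Real.pi) * (Real.pi * (0 - f t)) := by rw [hIoi t]
      _ = Real.sqrt Real.pi * f t := by
          rw [show -(1/Real.sqrt Real.pi) * (Real.pi * (0 - f t))
              = Real.pi / Real.sqrt Real.pi * f t from by ring, Real.div_sqrt]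
  have hrg : rightRLint (1/2) g = fun t => Real.sqrt Real.pi * f t := by
    rw [eqint g]
    funext t
    exact key t
  refine ⟨⟨fun t => ?_, fun t => (hIf t).differentiableAt⟩,
    ⟨fun t => ?_, fun t => ?_⟩, fun t => ?_⟩
  · exact (show Integrable (fun u => (u - t) ^ (-(1/2:ℝ)) * f u) volume from
      integrable_K_mul contf t hbf).integrableOn
  · exact (show Integrable (fun u => (u - t) ^ (-(1/2:ℝ)) * g u) volume from
      integrable_K_mul contg t hbg).integrableOn
  · rw [hrg]
    exact (hfd t).const_mul _
  · show -(1 / Real.Gamma (1 - 1/2)) * deriv (rightRLint (1/2) g) t = -deriv f t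
    rw [hrg, show (1 - 1/2 : ℝ) = 1/2 by norm_num, Real.Gamma_one_half_eq,
      deriv_const_mul _ (hfd t)]
    have h2 : Real.sqrt Real.pi * Real.sqrt Real.pi = Real.pi :=
      Real.mul_self_sqrt Real.pi_pos.le
    have h3 : Real.sqrt Real.pi ≠ 0 := ne_of_gt (Real.sqrt_pos.2 Real.pi_pos)
    field_simp

end
end
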